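/- Let V be a finite type with two distinct distinguished elements s (source) and t (terminal), let φ⁰ : V → V → ℝ be initial capacities, and let ψ, ψ' : V → V → ℝ be antisymmetric flows such that ψ' − ψ is a null flow (∑_{j ∈ V} (ψ' j i − ψ j i) = 0 for every i ∈ V). Then the residual capacities φ⁰ − ψ and φ⁰ − ψ' represent the same energy function exactly: for every subset S ⊆ V with s ∈ S and t ∉ S, ∑_{i ∈ S} ∑_{j ∉ S} (φ⁰ i j − ψ i j) = ∑_{i ∈ S} ∑_{j ∉ S} (φ⁰ i j − ψ' i j). -/

import Mathlib

/-!
Write `δ = ψ' - ψ`; it is again antisymmetric and, by hypothesis, conservative at every node.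
The cut cost is additive in the capacities, so it suffices that `δ` carries nothing across any
cut. Splitting the outflow of `S` as (total outflow of `S`) minus (flow inside `S`): the first
vanishes because antisymmetry turns outflow into minus inflow, and the second because
antisymmetric terms cancel in pairs.
-/

open Finset

section

variable {V M : Type*} [AddCommGroup M]

/-- Torsion-freeness is what kills the diagonal terms: `δ i i = -δ i i`. -/
theorem sum_sum_eq_zero_of_antisymm [IsAddTorsionFree M] {δ : V → V → M}
    (hanti : ∀ i j, δ i j = -δ j i) (S : Finset V) :
    ∑ i ∈ S, ∑ j ∈ S, δ i j = 0 :=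
  self_eq_neg.mp <| by
    conv_lhs => rw [sum_comm]
    simp only [← sum_neg_distrib, ← hanti]

variable [Fintype V] [DecidableEq V]

def cutCost (φ : V → V → M) (S : Finset V) : M :=
  ∑ i ∈ S, ∑ j ∈ Sᶜ, φ i j

theorem cutCost_sub (φ ψ : V → V → M) (S : Finset V) :
    cutCost (φ - ψ) S = cutCost φ S - cutCost ψ S := by
  simp only [cutCost, Pi.sub_apply, sum_sub_distrib]

theorem cutCost_eq_zero_of_antisymm_of_conservative [IsAddTorsionFree M] {δ : V → V → M}
    (hanti : ∀ i j, δ i j = -δ j i) (hcons : ∀ i, ∑ j, δ j i = 0) (S : Finset V) :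
    cutCost δ S = 0 := by
  have houtflow : ∀ i, ∑ j, δ i j = 0 := fun i => by
    simp only [hanti i, sum_neg_distrib, hcons, neg_zero]
  calc cutCost δ S = ∑ i ∈ S, ∑ j, δ i j - ∑ i ∈ S, ∑ j ∈ S, δ i j := by
        simp only [cutCost, ← sum_sub_distrib, ← sum_compl_add_sum S, add_sub_cancel_right]
    _ = 0 := by simp only [houtflow, sum_const_zero, sum_sum_eq_zero_of_antisymm hanti, sub_zero]

end

theorem residual_capacities_same_energy_of_diff_null_flow_general
    {V : Type*} [Fintype V] [DecidableEq V] (s t : V)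
    (φ0 ψ ψ' : V → V → ℝ)
    (hanti : ∀ i j, ψ i j = -ψ j i)
    (hanti' : ∀ i j, ψ' i j = -ψ' j i)
    (hnull : ∀ i, ∑ j, (ψ' j i - ψ j i) = 0) :
    ∀ S : Finset V, s ∈ S → t ∉ S →
      ∑ i ∈ S, ∑ j ∈ Sᶜ, (φ0 i j - ψ i j) =
        ∑ i ∈ S, ∑ j ∈ Sᶜ, (φ0 i j - ψ' i j) := by
  intro S _ _
  have hdiff_anti : ∀ i j, (ψ' - ψ) i j = -(ψ' - ψ) j i := fun i j => by
    simp only [Pi.sub_apply, hanti i j, hanti' i j, neg_sub_neg, neg_sub]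
  have hdiff_cut : cutCost (ψ' - ψ) S = 0 :=
    cutCost_eq_zero_of_antisymm_of_conservative hdiff_anti hnull S
  change cutCost (φ0 - ψ) S = cutCost (φ0 - ψ') S
  rw [cutCost_sub] at hdiff_cut ⊢
  rw [cutCost_sub]
  linarith

/-- If `ψ' - ψ` is a null flow, then the residual capacities `φ0 - ψ` and
`φ0 - ψ'` represent the same energy function exactly. -/
theorem residual_capacities_same_energy_of_diff_null_flow
    {V : Type*} [Fintype V] [DecidableEq V] (s t : V) (hst : s ≠ t)
    (φ0 ψ ψ' : V → V → ℝ)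
    (hanti : ∀ i j, ψ i j = -ψ j i)
    (hanti' : ∀ i j, ψ' i j = -ψ' j i)
    (hnull : ∀ i, ∑ j, (ψ' j i - ψ j i) = 0) :
    ∀ S : Finset V, s ∈ S → t ∉ S →
      ∑ i ∈ S, ∑ j ∈ Sᶜ, (φ0 i j - ψ i j) =
        ∑ i ∈ S, ∑ j ∈ Sᶜ, (φ0 i j - ψ' i j) :=
  residual_capacities_same_energy_of_diff_null_flow_general s t φ0 ψ ψ' hanti hanti' hnull
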